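/- arXiv:2006.12728 — 2 statements merged into one kernel-verified Lean document; each statement's English description precedes it below -/
import Mathlib

section
/- Let n ≥ 0 be an integer, δ > 0, let W ⊂ ℝ^m be a measurable set of finite positive Lebesgue measure, and let g : W → ℝ be a bounded measurable function. Then lim_{τ→∞} τ^{n+1} ∫_W ∫₀^δ s^n e^{−τ s} e^{√τ · s · g(y)} ds dy = n! · |W|, where |W| denotes the Lebesgue measure of W. -/
/-!
Put `c = τ - √τ · a`. The substitution `ξ = c s` turns `τ^{n+1} ∫₀^δ sⁿ e^{-cs} ds` into
`(τ / c)^{n+1} ∫₀^{cδ} ξⁿ e^{-ξ} dξ`. For `|a| ≤ C` and large `τ` we have `c ≥ τ / 2`, which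
bounds this by `2^{n+1} n!` uniformly in `a`, while for fixed `a` it tends to `Γ(n+1) = n!`.
Dominated convergence over `W`, with `a = g y`, gives the limit `n! · |W|`.
-/

open Filter MeasureTheory Set Real
open scoped Nat Topology

lemma tendsto_intervalIntegral_pow_mul_exp_neg_atTop (n : ℕ) :
    Tendsto (fun X => ∫ ξ in (0 : ℝ)..X, ξ ^ n * exp (-ξ)) atTop (𝓝 (n ! : ℝ)) := by
  have hGamma : ∀ ξ ∈ Ioi (0 : ℝ), exp (-ξ) * ξ ^ ((n + 1 : ℝ) - 1) = ξ ^ n * exp (-ξ) := by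
    intro ξ _
    rw [add_sub_cancel_right, rpow_natCast, mul_comm]
  have hint : IntegrableOn (fun ξ : ℝ => ξ ^ n * exp (-ξ)) (Ioi 0) :=
    (GammaIntegral_convergent (by positivity)).congr_fun hGamma measurableSet_Ioi
  have hval : ∫ ξ in Ioi (0 : ℝ), ξ ^ n * exp (-ξ) = n ! := by
    rw [← Gamma_nat_eq_factorial, Gamma_eq_integral (by positivity),
      setIntegral_congr_fun measurableSet_Ioi hGamma]
  exact hval ▸ intervalIntegral_tendsto_integral_Ioi 0 hint tendsto_id

lemma intervalIntegral_pow_mul_exp_neg_mul (n : ℕ) {c : ℝ} (hc : c ≠ 0) (δ : ℝ) :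
    ∫ s in (0 : ℝ)..δ, s ^ n * exp (-(c * s)) =
      (c ^ (n + 1))⁻¹ * ∫ ξ in (0 : ℝ)..c * δ, ξ ^ n * exp (-ξ) := by
  have hscale : ∀ s : ℝ, s ^ n * exp (-(c * s)) = (c ^ n)⁻¹ * ((c * s) ^ n * exp (-(c * s))) := by
    intro s
    rw [mul_pow, ← mul_assoc, ← mul_assoc, inv_mul_cancel₀ (pow_ne_zero n hc), one_mul]
  simp_rw [hscale, intervalIntegral.integral_const_mul,
    intervalIntegral.integral_comp_mul_left (fun ξ => ξ ^ n * exp (-ξ)) hc, mul_zero, smul_eq_mul,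
    pow_succ, mul_inv, mul_assoc]

lemma eventually_half_le_sub_sqrt_mul (C : ℝ) :
    ∀ᶠ τ in atTop, 0 < τ ∧ ∀ a, |a| ≤ C → τ / 2 ≤ τ - √τ * a := by
  filter_upwards [eventually_gt_atTop 0, tendsto_sqrt_atTop.eventually_ge_atTop (2 * C)]
    with τ hτ hsqrt
  refine ⟨hτ, fun a ha => ?_⟩
  have hsa : √τ * a ≤ √τ * C :=
    mul_le_mul_of_nonneg_left ((le_abs_self a).trans ha) (sqrt_nonneg τ)
  nlinarith [sq_sqrt hτ.le, sqrt_nonneg τ]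

lemma tendsto_div_sub_sqrt_mul (a : ℝ) :
    Tendsto (fun τ => τ / (τ - √τ * a)) atTop (𝓝 1) := by
  have h : Tendsto (fun τ => (1 - a / √τ)⁻¹) atTop (𝓝 1) := by
    simpa using ((tendsto_const_nhds (x := (1 : ℝ))).sub
      (tendsto_const_nhds.div_atTop tendsto_sqrt_atTop)).inv₀ (by norm_num : (1 : ℝ) - 0 ≠ 0)
  refine h.congr' ?_
  filter_upwards [eventually_gt_atTop 0] with τ hτ
  have hratio : 1 - a / √τ = (τ - √τ * a) / τ := by
    field_simp
    linear_combination a * sq_sqrt hτ.le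
  rw [hratio, inv_div]

lemma tendsto_pow_mul_intervalIntegral_pow_mul_exp_neg (n : ℕ) {δ : ℝ} (hδ : 0 < δ) (a : ℝ) :
    Tendsto (fun τ => τ ^ (n + 1) * ∫ s in (0 : ℝ)..δ, s ^ n * exp (-((τ - √τ * a) * s)))
      atTop (𝓝 (n ! : ℝ)) := by
  have hrate : Tendsto (fun τ => τ - √τ * a) atTop atTop :=
    tendsto_atTop_mono' _ ((eventually_half_le_sub_sqrt_mul |a|).mono fun τ hτ => hτ.2 a le_rfl)
      (tendsto_id.atTop_div_const two_pos)
  have hlim := ((tendsto_div_sub_sqrt_mul a).pow (n + 1)).mul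
    ((tendsto_intervalIntegral_pow_mul_exp_neg_atTop n).comp (hrate.atTop_mul_const hδ))
  rw [one_pow, one_mul] at hlim
  refine hlim.congr' ?_
  filter_upwards [eventually_half_le_sub_sqrt_mul |a|] with τ ⟨hτ, hhalf⟩
  have hc : τ - √τ * a ≠ 0 := (lt_of_lt_of_le (by positivity) (hhalf a le_rfl)).ne'
  rw [Function.comp_apply, intervalIntegral_pow_mul_exp_neg_mul n hc, div_pow, div_eq_mul_inv,
    mul_assoc]

lemma eventually_abs_pow_mul_intervalIntegral_pow_mul_exp_neg_le (n : ℕ) {δ : ℝ} (hδ : 0 ≤ δ)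
    (C : ℝ) :
    ∀ᶠ τ in atTop, ∀ a, |a| ≤ C →
      |τ ^ (n + 1) * ∫ s in (0 : ℝ)..δ, s ^ n * exp (-((τ - √τ * a) * s))| ≤ 2 ^ (n + 1) * n ! := by
  filter_upwards [eventually_half_le_sub_sqrt_mul C] with τ ⟨hτ, hhalf⟩ a ha
  have hc : 0 < τ - √τ * a := lt_of_lt_of_le (by positivity) (hhalf a ha)
  have hnonneg : 0 ≤ ∫ s in (0 : ℝ)..δ, s ^ n * exp (-((τ - √τ * a) * s)) :=
    intervalIntegral.integral_nonneg hδ fun s hs => mul_nonneg (pow_nonneg hs.1 n) (exp_nonneg _)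
  rw [abs_of_nonneg (by positivity)]
  calc τ ^ (n + 1) * ∫ s in (0 : ℝ)..δ, s ^ n * exp (-((τ - √τ * a) * s))
      ≤ τ ^ (n + 1) * (n ! / (τ - √τ * a) ^ (n + 1)) := by
        gcongr
        exact intervalIntegral_pow_mul_exp_neg_le hδ hc
    _ = (τ / (τ - √τ * a)) ^ (n + 1) * n ! := by rw [div_pow]; ring
    _ ≤ 2 ^ (n + 1) * n ! := by
        gcongr
        rw [div_le_iff₀ hc]
        linarith [hhalf a ha]

theorem stmt_7_general (n m : ℕ) (δ : ℝ) (hδ : 0 < δ)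
    (W : Set (Fin m → ℝ)) (hW : MeasurableSet W)
    (hWfin : volume W ≠ ⊤)
    (g : (Fin m → ℝ) → ℝ) (hgm : Measurable g)
    (hgb : ∃ C : ℝ, ∀ y ∈ W, |g y| ≤ C) :
    Tendsto (fun τ : ℝ => τ ^ (n + 1) *
        ∫ y in W, ∫ s in (0:ℝ)..δ,
          s ^ n * Real.exp (-τ * s) * Real.exp (Real.sqrt τ * s * g y))
      atTop (nhds ((Nat.factorial n : ℝ) * (volume W).toReal)) := by
  obtain ⟨C, hC⟩ := hgb
  have hexp : ∀ τ a s : ℝ,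
      s ^ n * exp (-τ * s) * exp (√τ * s * a) = s ^ n * exp (-((τ - √τ * a) * s)) := by
    intro τ a s
    rw [mul_assoc, ← exp_add]
    ring_nf
  have hvol : (n ! : ℝ) * (volume W).toReal = ∫ _ in W, (n ! : ℝ) := by
    rw [setIntegral_const, smul_eq_mul, mul_comm, measureReal_def]
  have hcont : ∀ τ, Continuous fun a : ℝ =>
      τ ^ (n + 1) * ∫ s in (0 : ℝ)..δ, s ^ n * exp (-((τ - √τ * a) * s)) := fun τ => by
    fun_prop
  simp_rw [hexp, ← integral_const_mul, hvol]
  refine tendsto_integral_filter_of_dominated_convergence (fun _ => 2 ^ (n + 1) * n !)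
    (Eventually.of_forall fun τ => ((hcont τ).measurable.comp hgm).aestronglyMeasurable)
    ?_ (integrableOn_const hWfin)
    (ae_of_all _ fun y => tendsto_pow_mul_intervalIntegral_pow_mul_exp_neg n hδ (g y))
  filter_upwards [eventually_abs_pow_mul_intervalIntegral_pow_mul_exp_neg_le n hδ.le C] with τ hτ
  exact (ae_restrict_iff' hW).2 (ae_of_all _ fun y hy => hτ (g y) (hC y hy))

/-- Laplace-type asymptotics:
`τ^{n+1} ∫_W ∫₀^δ s^n e^{−τs} e^{√τ·s·g(y)} ds dy → n!·|W|`. -/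
theorem stmt_7 (n m : ℕ) (δ : ℝ) (hδ : 0 < δ)
    (W : Set (Fin m → ℝ)) (hW : MeasurableSet W)
    (hW0 : volume W ≠ 0) (hWfin : volume W ≠ ⊤)
    (g : (Fin m → ℝ) → ℝ) (hgm : Measurable g)
    (hgb : ∃ C : ℝ, ∀ y ∈ W, |g y| ≤ C) :
    Tendsto (fun τ : ℝ => τ ^ (n + 1) *
        ∫ y in W, ∫ s in (0:ℝ)..δ,
          s ^ n * Real.exp (-τ * s) * Real.exp (Real.sqrt τ * s * g y))
      atTop (nhds ((Nat.factorial n : ℝ) * (volume W).toReal)) :=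
  stmt_7_general n m δ hδ W hW hWfin g hgm hgb
end

section
/- Let Ω ⊂ ℝⁿ be a measurable set, let γ, γ₀ : Ω → ℝ be measurable with γ(x) ≥ c > 0 a.e., and let w, G : Ω → ℝⁿ be vector fields with γ|w|², (γ−γ₀)|G|², (γ−γ₀)²/γ·|G|² integrable, satisfying the orthogonality relation ∫_Ω ( γ |w|² + (γ − γ₀) G·w ) dx = 0. Then: (i) ∫_Ω γ |w|² dx ≤ ∫_Ω ((γ − γ₀)²/γ) |G|² dx; and consequently (ii) ∫_Ω (γ₀ (γ−γ₀)/γ) |G|² dx ≤ ∫_Ω (γ − γ₀) |G|² dx − ∫_Ω γ |w|² dx ≤ ∫_Ω (γ − γ₀) |G|² dx. -/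
open MeasureTheory

/-!
Completing the square, `0 ≤ γ ‖w + ((γ - γ₀) / γ) • G‖²`, bounds the cross term
`-(γ - γ₀) ⟪G, w⟫` by `(γ ‖w‖² + (γ - γ₀)²/γ ‖G‖²) / 2`. By the orthogonality relation the
integral of the cross term is the energy `∫ γ ‖w‖²` itself, which gives (i). Part (ii) follows
from (i) and the pointwise identity `(γ - γ₀) - (γ - γ₀)²/γ = γ₀ (γ - γ₀)/γ`.
-/

section

variable {E : Type*} [NormedAddCommGroup E] [InnerProductSpace ℝ E]

lemma mul_norm_add_div_smul_sq {g : ℝ} (hg : g ≠ 0) (d : ℝ) (u v : E) :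
    g * ‖v + (d / g) • u‖ ^ 2 = g * ‖v‖ ^ 2 + 2 * (d * inner ℝ u v) + d ^ 2 / g * ‖u‖ ^ 2 := by
  rw [norm_add_sq_real, inner_smul_right, norm_smul, Real.norm_eq_abs, mul_pow, sq_abs,
    real_inner_comm]
  field_simp

lemma neg_two_mul_inner_le {g : ℝ} (hg : 0 < g) (d : ℝ) (u v : E) :
    -(2 * (d * inner ℝ u v)) ≤ g * ‖v‖ ^ 2 + d ^ 2 / g * ‖u‖ ^ 2 := by
  have hsq := mul_norm_add_div_smul_sq hg.ne' d u v
  have : 0 ≤ g * ‖v + (d / g) • u‖ ^ 2 := by positivity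
  linarith

variable {α : Type*} [MeasurableSpace α] {μ : Measure α}

theorem integral_mul_norm_sq_le_of_orthogonal {γ d : α → ℝ} {w G : α → E}
    (hγ : ∀ᵐ x ∂μ, 0 < γ x)
    (hw : Integrable (fun x => γ x * ‖w x‖ ^ 2) μ)
    (hG : Integrable (fun x => d x ^ 2 / γ x * ‖G x‖ ^ 2) μ)
    (hcross : Integrable (fun x => d x * inner ℝ (G x) (w x)) μ)
    (horth : ∫ x, (γ x * ‖w x‖ ^ 2 + d x * inner ℝ (G x) (w x)) ∂μ = 0) :
    ∫ x, γ x * ‖w x‖ ^ 2 ∂μ ≤ ∫ x, d x ^ 2 / γ x * ‖G x‖ ^ 2 ∂μ := by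
  rw [integral_add hw hcross] at horth
  have hcross_le : ∫ x, -(2 * (d x * inner ℝ (G x) (w x))) ∂μ
      ≤ ∫ x, (γ x * ‖w x‖ ^ 2 + d x ^ 2 / γ x * ‖G x‖ ^ 2) ∂μ :=
    integral_mono_ae (hcross.const_mul 2).neg (hw.add hG)
      (hγ.mono fun x hx => neg_two_mul_inner_le hx (d x) (G x) (w x))
  rw [integral_neg, integral_const_mul, integral_add hw hG] at hcross_le
  linarith

end

lemma sub_sub_sq_div_eq {a b : ℝ} (ha : a ≠ 0) : (a - b) - (a - b) ^ 2 / a = b * (a - b) / a := by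
  field_simp
  ring

theorem stmt_11_general (n : ℕ) (Ω : Set (EuclideanSpace ℝ (Fin n)))
    (γ γ₀ : EuclideanSpace ℝ (Fin n) → ℝ)
    (w G : EuclideanSpace ℝ (Fin n) → EuclideanSpace ℝ (Fin n))
    (c : ℝ) (hc : 0 < c) (hγ : ∀ᵐ x ∂(volume.restrict Ω), c ≤ γ x)
    (h1 : IntegrableOn (fun x => γ x * ‖w x‖ ^ 2) Ω)
    (h2 : IntegrableOn (fun x => (γ x - γ₀ x) * ‖G x‖ ^ 2) Ω)
    (h3 : IntegrableOn (fun x => (γ x - γ₀ x) ^ 2 / γ x * ‖G x‖ ^ 2) Ω)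
    (h4 : IntegrableOn (fun x => (γ x - γ₀ x) * (inner ℝ (G x) (w x) : ℝ)) Ω)
    (horth : (∫ x in Ω,
        (γ x * ‖w x‖ ^ 2 + (γ x - γ₀ x) * (inner ℝ (G x) (w x) : ℝ))) = 0) :
    (∫ x in Ω, γ x * ‖w x‖ ^ 2)
        ≤ (∫ x in Ω, (γ x - γ₀ x) ^ 2 / γ x * ‖G x‖ ^ 2) ∧
    (∫ x in Ω, γ₀ x * (γ x - γ₀ x) / γ x * ‖G x‖ ^ 2)
        ≤ (∫ x in Ω, (γ x - γ₀ x) * ‖G x‖ ^ 2) - (∫ x in Ω, γ x * ‖w x‖ ^ 2) ∧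
    (∫ x in Ω, (γ x - γ₀ x) * ‖G x‖ ^ 2) - (∫ x in Ω, γ x * ‖w x‖ ^ 2)
        ≤ (∫ x in Ω, (γ x - γ₀ x) * ‖G x‖ ^ 2) := by
  have hγ_pos : ∀ᵐ x ∂(volume.restrict Ω), 0 < γ x := hγ.mono fun x hx => hc.trans_le hx
  have henergy_le := integral_mul_norm_sq_le_of_orthogonal hγ_pos h1 h3 h4 horth
  have henergy_nonneg : 0 ≤ ∫ x in Ω, γ x * ‖w x‖ ^ 2 :=
    integral_nonneg_of_ae (hγ_pos.mono fun x hx => by positivity)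
  have hlower : (∫ x in Ω, γ₀ x * (γ x - γ₀ x) / γ x * ‖G x‖ ^ 2)
      = (∫ x in Ω, (γ x - γ₀ x) * ‖G x‖ ^ 2)
        - ∫ x in Ω, (γ x - γ₀ x) ^ 2 / γ x * ‖G x‖ ^ 2 := by
    rw [← integral_sub h2 h3]
    refine integral_congr_ae (hγ_pos.mono fun x hx => ?_)
    simp only [← sub_mul, sub_sub_sq_div_eq hx.ne']
  exact ⟨henergy_le, by linarith, by linarith⟩

/-- two-sided energy bounds obtained by completing the square
from the orthogonality relation `∫ (γ|w|² + (γ−γ₀) G·w) = 0`. -/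
theorem stmt_11 (n : ℕ) (Ω : Set (EuclideanSpace ℝ (Fin n))) (hΩ : MeasurableSet Ω)
    (γ γ₀ : EuclideanSpace ℝ (Fin n) → ℝ)
    (w G : EuclideanSpace ℝ (Fin n) → EuclideanSpace ℝ (Fin n))
    (hγm : Measurable γ) (hγ₀m : Measurable γ₀)
    (hwm : Measurable w) (hGm : Measurable G)
    (c : ℝ) (hc : 0 < c) (hγ : ∀ᵐ x ∂(volume.restrict Ω), c ≤ γ x)
    (h1 : IntegrableOn (fun x => γ x * ‖w x‖ ^ 2) Ω)
    (h2 : IntegrableOn (fun x => (γ x - γ₀ x) * ‖G x‖ ^ 2) Ω)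
    (h3 : IntegrableOn (fun x => (γ x - γ₀ x) ^ 2 / γ x * ‖G x‖ ^ 2) Ω)
    (h4 : IntegrableOn (fun x => (γ x - γ₀ x) * (inner ℝ (G x) (w x) : ℝ)) Ω)
    (horth : (∫ x in Ω,
        (γ x * ‖w x‖ ^ 2 + (γ x - γ₀ x) * (inner ℝ (G x) (w x) : ℝ))) = 0) :
    (∫ x in Ω, γ x * ‖w x‖ ^ 2)
        ≤ (∫ x in Ω, (γ x - γ₀ x) ^ 2 / γ x * ‖G x‖ ^ 2) ∧
    (∫ x in Ω, γ₀ x * (γ x - γ₀ x) / γ x * ‖G x‖ ^ 2)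
        ≤ (∫ x in Ω, (γ x - γ₀ x) * ‖G x‖ ^ 2) - (∫ x in Ω, γ x * ‖w x‖ ^ 2) ∧
    (∫ x in Ω, (γ x - γ₀ x) * ‖G x‖ ^ 2) - (∫ x in Ω, γ x * ‖w x‖ ^ 2)
        ≤ (∫ x in Ω, (γ x - γ₀ x) * ‖G x‖ ^ 2) :=
  stmt_11_general n Ω γ γ₀ w G c hc hγ h1 h2 h3 h4 horth
end
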